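/- Let G and H be connected graphs of orders n and m respectively, and let g satisfy ⌊(m−3)/2⌋ < g ≤ ⌊(n−3)/2⌋. Then κ_g(G∨H) = κ_g(G) + m. -/

import Mathlib

set_option linter.unusedSectionVars false

open SimpleGraph

/-- `S` is an `R_g`-cutset of `G`: removing `S` disconnects `G` and every
connected component of `G - S` has at least `g + 1` vertices. -/
def IsRgCutset {V : Type*} [Fintype V] [DecidableEq V] (G : SimpleGraph V) (g : ℕ)
    (S : Finset V) : Prop :=
  S.Nonempty ∧ ¬ (G.induce ((S : Set V)ᶜ)).Preconnected ∧
    ∀ c : (G.induce ((S : Set V)ᶜ)).ConnectedComponent, g + 1 ≤ Nat.card c.supp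

/-- The `g`-extra connectivity: minimum size of an `R_g`-cutset. -/
noncomputable def extraConn {V : Type*} [Fintype V] [DecidableEq V]
    (G : SimpleGraph V) (g : ℕ) : ℕ :=
  sInf {k | ∃ S : Finset V, S.card = k ∧ IsRgCutset G g S}

/-- The join `G ∨ H` of two graphs: disjoint union plus all edges in between. -/
def joinG {α β : Type*} (G : SimpleGraph α) (H : SimpleGraph β) : SimpleGraph (α ⊕ β) where
  Adj x y := match x, y with
    | Sum.inl a, Sum.inl b => G.Adj a b
    | Sum.inr a, Sum.inr b => H.Adj a b
    | _, _ => True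
  symm := by
    constructor
    rintro (a | a) (b | b) h
    · exact h.symm
    · trivial
    · trivial
    · exact h.symm
  loopless := by
    constructor
    rintro (a | a) h
    · exact G.irrefl h
    · exact H.irrefl h


section Aux
variable {α β : Type*} [Fintype α] [Fintype β] [DecidableEq α] [DecidableEq β]
variable (G : SimpleGraph α) (H : SimpleGraph β)

-- the big cutset in the join
def bigT (S : Finset α) : Finset (α ⊕ β) :=
  S.image Sum.inl ∪ Finset.univ.image Sum.inr

lemma inl_mem_bigT {S : Finset α} {a : α} : Sum.inl a ∈ bigT (β := β) S ↔ a ∈ S := by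
  simp [bigT]

lemma inr_mem_bigT {S : Finset α} (b : β) : Sum.inr b ∈ bigT S := by
  simp [bigT]

lemma card_bigT (S : Finset α) : (bigT (β := β) S).card = S.card + Fintype.card β := by
  rw [bigT, Finset.card_union_of_disjoint, Finset.card_image_of_injective _ Sum.inl_injective,
    Finset.card_image_of_injective _ Sum.inr_injective, Finset.card_univ]
  simp [Finset.disjoint_left]

noncomputable def joinIso (S : Finset α) :
    (G.induce ((S : Set α)ᶜ)) ≃g
      ((joinG G H).induce (((bigT (β := β) S : Finset (α ⊕ β)) : Set (α ⊕ β))ᶜ)) := by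
  refine ⟨Equiv.ofBijective (fun a => ⟨Sum.inl a.1, ?_⟩) ⟨?_, ?_⟩, ?_⟩
  · have := a.2
    simp only [Set.mem_compl_iff, Finset.mem_coe] at this ⊢
    simpa [inl_mem_bigT] using this
  · intro a b hab
    exact Subtype.ext (Sum.inl_injective (congrArg Subtype.val hab))
  · rintro ⟨(a | b), hx⟩
    · refine ⟨⟨a, ?_⟩, rfl⟩
      have := hx
      simp only [Set.mem_compl_iff, Finset.mem_coe, inl_mem_bigT] at this
      simpa using this
    · exact absurd (inr_mem_bigT b) (by simpa using hx)
  · intro a b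
    rfl

end Aux

section Transfer
variable {V W : Type*} {A : SimpleGraph V} {B : SimpleGraph W}

lemma supp_card_transfer (e : A ≃g B)
    (h : ∀ c : A.ConnectedComponent, g + 1 ≤ Nat.card c.supp) :
    ∀ c : B.ConnectedComponent, g + 1 ≤ Nat.card c.supp := by
  intro c
  refine SimpleGraph.ConnectedComponent.ind (fun w => ?_) c
  refine le_trans (h (A.connectedComponentMk (e.symm w))) (le_of_eq (Nat.card_congr ?_))
  refine Equiv.subtypeEquiv e.toEquiv (fun v => ?_)
  simp only [SimpleGraph.ConnectedComponent.mem_supp_iff, SimpleGraph.ConnectedComponent.eq]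
  constructor
  · intro hr
    have := hr.map e.toHom
    simpa using this
  · intro hr
    have := hr.map e.symm.toHom
    simpa using this

end Transfer

section Main
variable {α β : Type*} [Fintype α] [Fintype β] [DecidableEq α] [DecidableEq β]
variable {G : SimpleGraph α} {H : SimpleGraph β}

lemma isRgCutset_bigT {S : Finset α} (hS : IsRgCutset G g S) :
    IsRgCutset (joinG G H) g (bigT S) := by
  obtain ⟨hne, hnp, hcomp⟩ := hS
  refine ⟨?_, ?_, ?_⟩
  · obtain ⟨a, ha⟩ := hne
    exact ⟨Sum.inl a, inl_mem_bigT.mpr ha⟩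
  · intro hpre
    exact hnp (((joinIso G H S).preconnected_iff).mpr hpre)
  · exact supp_card_transfer (joinIso G H S) hcomp

lemma isRgCutset_of_bigT {S : Finset α} (hG : G.Connected)
    (hT : IsRgCutset (joinG G H) g (bigT S)) : IsRgCutset G g S := by
  obtain ⟨hne, hnp, hcomp⟩ := hT
  have e := joinIso G H S
  refine ⟨?_, ?_, ?_⟩
  · rcases Finset.eq_empty_or_nonempty S with rfl | h
    · exfalso
      apply hnp
      rw [← e.preconnected_iff]
      intro u v
      have hr : G.Reachable u.1 v.1 := hG u.1 v.1
      exact Reachable.map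
        (⟨fun a => ⟨a, by simp⟩, fun h => h⟩ :
          G →g G.induce (((∅ : Finset α) : Set α)ᶜ)) hr
    · exact h
  · intro hpre
    exact hnp (e.preconnected_iff.mp hpre)
  · exact supp_card_transfer e.symm hcomp

end Main

theorem extraConn_join_large_g {α β : Type*} [Fintype α] [Fintype β] [DecidableEq α] [DecidableEq β]
    (G : SimpleGraph α) (H : SimpleGraph β) (n m g : ℕ)
    (hn : Fintype.card α = n) (hm : Fintype.card β = m)
    (hG : G.Connected) (hH : H.Connected)
    (hg1 : (m - 3) / 2 < g) (hg2 : g ≤ (n - 3) / 2)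
    (hEG : ∃ S, IsRgCutset G g S) :
    extraConn (joinG G H) g = extraConn G g + m := by
  classical
  have hsetG : {k | ∃ S : Finset α, S.card = k ∧ IsRgCutset G g S}.Nonempty := by
    obtain ⟨S, hS⟩ := hEG; exact ⟨S.card, S, rfl, hS⟩
  obtain ⟨S₀, hS₀card, hS₀⟩ := Nat.sInf_mem hsetG
  have hub : extraConn (joinG G H) g ≤ extraConn G g + m := by
    apply Nat.sInf_le
    exact ⟨bigT S₀, by rw [card_bigT, hS₀card, hm, extraConn], isRgCutset_bigT hS₀⟩
  refine le_antisymm hub ?_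
  rw [extraConn]
  refine le_csInf ?_ ?_
  · exact ⟨(bigT (β := β) S₀).card, bigT S₀, rfl, isRgCutset_bigT hS₀⟩
  rintro k ⟨T, rfl, hT⟩
  -- Step 1 : every `inr` vertex belongs to T
  have hinr : ∀ b : β, Sum.inr b ∈ T := by
    by_contra hcon
    push_neg at hcon
    obtain ⟨b, hb⟩ := hcon
    obtain ⟨hne, hnp, hcomp⟩ := hT
    set A := (joinG G H).induce ((T : Set (α ⊕ β))ᶜ) with hA_def
    have hbmem : (Sum.inr b : α ⊕ β) ∈ ((T : Set (α ⊕ β))ᶜ) := by simpa using hb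
    by_cases hA : ∃ a : α, Sum.inl a ∉ T
    · obtain ⟨a, ha⟩ := hA
      apply hnp
      have hamem : (Sum.inl a : α ⊕ β) ∈ ((T : Set (α ⊕ β))ᶜ) := by simpa using ha
      have key : ∀ x : ((T : Set (α ⊕ β))ᶜ : Set (α ⊕ β)),
          A.Reachable x ⟨Sum.inr b, hbmem⟩ := by
        rintro ⟨(c | d), hx⟩
        · exact Adj.reachable (by trivial)
        · exact Reachable.trans
            (Adj.reachable (v := ⟨Sum.inl a, hamem⟩) (by trivial))
            (Adj.reachable (by trivial))
      intro u v
      exact (key u).trans (key v).symm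
    · push_neg at hA
      rw [SimpleGraph.Preconnected] at hnp
      push_neg at hnp
      obtain ⟨u, v, huv⟩ := hnp
      by_cases hB : ∃ c : β, Sum.inr c ∈ T
      · -- counting contradiction
        obtain ⟨c, hc⟩ := hB
        have hne12 : A.connectedComponentMk u ≠ A.connectedComponentMk v := by
          intro h
          exact huv (SimpleGraph.ConnectedComponent.exact h)
        have hdis : Disjoint (A.connectedComponentMk u).supp (A.connectedComponentMk v).supp := by
          rw [Set.disjoint_left]
          intro x hx hx'
          rw [SimpleGraph.ConnectedComponent.mem_supp_iff] at hx hx'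
          exact hne12 (hx ▸ hx')
        have h1 := hcomp (A.connectedComponentMk u)
        have h2 := hcomp (A.connectedComponentMk v)
        rw [Nat.card_coe_set_eq] at h1 h2
        have hcard : 2 * g + 2 ≤ ((T : Set (α ⊕ β))ᶜ : Set (α ⊕ β)).ncard := by
          have hu := Set.ncard_union_eq hdis (Set.toFinite _) (Set.toFinite _)
          have hle : ((A.connectedComponentMk u).supp ∪ (A.connectedComponentMk v).supp).ncard
              ≤ (Set.univ : Set ((T : Set (α ⊕ β))ᶜ : Set (α ⊕ β))).ncard :=
            Set.ncard_le_ncard (Set.subset_univ _) Set.finite_univ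
          rw [Set.ncard_univ, Nat.card_coe_set_eq] at hle
          omega
        have hsub : ((T : Set (α ⊕ β))ᶜ : Set (α ⊕ β)) ⊆ Sum.inr '' ({c}ᶜ : Set β) := by
          rintro (a | d) hx
          · exact absurd (hA a) (by simpa using hx)
          · refine ⟨d, ?_, rfl⟩
            intro hdc
            simp only [Set.mem_singleton_iff] at hdc
            subst hdc
            have hxT : Sum.inr d ∉ T := by simpa using hx
            exact hxT hc
        have hm1 : ((T : Set (α ⊕ β))ᶜ : Set (α ⊕ β)).ncard ≤ m - 1 := by
          refine le_trans (Set.ncard_le_ncard hsub (Set.toFinite _)) ?_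
          rw [Set.ncard_image_of_injective _ Sum.inr_injective]
          have hcompl : ({c}ᶜ : Set β) = ((({c} : Finset β)ᶜ : Finset β) : Set β) := by
            ext x; simp
          have : ({c}ᶜ : Set β).ncard = m - 1 := by
            rw [hcompl, Set.ncard_coe_finset, Finset.card_compl, Finset.card_singleton, hm]
          omega
        have hm2 : 1 ≤ m := by
          have : 0 < Fintype.card β := Fintype.card_pos_iff.mpr ⟨c⟩
          omega
        omega
      · push_neg at hB
        apply huv
        obtain ⟨(a | cu), hu⟩ := u
        · exact absurd (hA a) (by simpa using hu)
        obtain ⟨(a | cv), hv⟩ := v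
        · exact absurd (hA a) (by simpa using hv)
        exact Reachable.map
          (⟨fun d => ⟨Sum.inr d, by simpa using hB d⟩, fun h => h⟩ : H →g A)
          (hH cu cv)
  -- Step 2 : T = bigT S'
  set S' : Finset α := Finset.univ.filter (fun a => Sum.inl a ∈ T) with hS'def
  have hTeq : T = bigT S' := by
    ext x
    rcases x with a | b
    · simp [bigT, hS'def]
    · simp [inr_mem_bigT, hinr b]
  have hSG : IsRgCutset G g S' := isRgCutset_of_bigT hG (hTeq ▸ hT)
  have hκ : extraConn G g ≤ S'.card := Nat.sInf_le ⟨S', rfl, hSG⟩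
  have : T.card = S'.card + m := by rw [hTeq, card_bigT, hm]
  have heq : extraConn G g = sInf {k | ∃ S : Finset α, S.card = k ∧ IsRgCutset G g S} := rfl
  omega
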